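/- There is a constant C₁ > 0, depending only on c and the Lipschitz constant of N on the convex hull of K, such that for all x, z ∈ ℝ: |Z^{2,0}(x) − Z^{1,0}(x)| ≤ C₁·R_0, |X^{2,0}(z) − X^{1,0}(z)| ≤ C₁·R_0, and |X^{1,0}(Z^{2,0}(x)) − x| ≤ C₁·R_0. -/

import Mathlib

/-!
`Z^{j,0}` is a primitive of `N ∘ w^{j,0}`, so `Z^{2,0} - Z^{1,0}` is bounded by `Lip(N) · R₀`.
Since `N ≥ c`, the map `Z^{1,0}` expands distances by a factor at least `c`; applying it to
`X^{2,0}(z) - X^{1,0}(z)` and to `X^{1,0}(Z^{2,0}(x)) - x` turns both into differences of the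
form `Z^{2,0} - Z^{1,0}` at a single point.
-/

open MeasureTheory Filter Set

/-- The shifted initial data in Lagrangian coordinates:
`w̃(t,z) i = w⁰(X⁰(z − λ̃ᵢ t)) i`. -/
noncomputable def wtld {n : ℕ} (tlam : Fin n → ℝ) (w0 : ℝ → Fin n → ℝ) (X0 : ℝ → ℝ)
    (t z : ℝ) : Fin n → ℝ :=
  fun i => w0 (X0 (z - tlam i * t)) i

/-- All the data attached to an initial datum `w⁰ ∈ L¹(ℝ; K)` for the rich, linearly
degenerate diagonal system with common entropy density `N`: the Lagrangian coordinate
`Z⁰` and its inverse `X⁰`, and the flow maps `X(t,·)` with inverses `Z(t,·)`.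
(By the relation `N·λᵢ − λ̃ᵢ = M`, the integrand defining `Xt` is independent of the
index `i`, whence the defining identity `defXt` is stated for every `i`.) -/
structure SolData {n : ℕ} (K : Set (Fin n → ℝ)) (N : (Fin n → ℝ) → ℝ)
    (lam : Fin n → (Fin n → ℝ) → ℝ) (tlam : Fin n → ℝ) where
  w0 : ℝ → Fin n → ℝ
  Z0 : ℝ → ℝ
  X0 : ℝ → ℝ
  Xt : ℝ → ℝ → ℝ
  Zt : ℝ → ℝ → ℝ
  meas : Measurable w0
  memK : ∀ x, w0 x ∈ K
  intgr : MeasureTheory.Integrable w0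
  defZ0 : ∀ x, Z0 x = ∫ ξ in (0:ℝ)..x, N (w0 ξ)
  invX0Z0 : ∀ x, X0 (Z0 x) = x
  invZ0X0 : ∀ z, Z0 (X0 z) = z
  defXt : ∀ (i : Fin n) (t z : ℝ), Xt t z = X0 z
      + ∫ τ in (0:ℝ)..t,
          (lam i (wtld tlam w0 X0 τ z) - tlam i / N (wtld tlam w0 X0 τ z))
  invXZ : ∀ t, 0 ≤ t → ∀ x, Xt t (Zt t x) = x
  invZX : ∀ t, 0 ≤ t → ∀ z, Zt t (Xt t z) = z

/-- The entropy solution associated with the data `d`: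
`wᵢ(t,x) = w⁰ᵢ(X⁰(Z(t,x) − λ̃ᵢ t))`. -/
noncomputable def SolData.sol {n : ℕ} {K : Set (Fin n → ℝ)} {N : (Fin n → ℝ) → ℝ}
    {lam : Fin n → (Fin n → ℝ) → ℝ} {tlam : Fin n → ℝ}
    (d : SolData K N lam tlam) (t x : ℝ) : Fin n → ℝ :=
  fun i => d.w0 (d.X0 (d.Zt t x - tlam i * t)) i

/-- `R₀ = ‖w^{2,0} − w^{1,0}‖_{L¹(ℝ;ℝⁿ)}`. -/
noncomputable def R0 {n : ℕ} {K : Set (Fin n → ℝ)} {N : (Fin n → ℝ) → ℝ}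
    {lam : Fin n → (Fin n → ℝ) → ℝ} {tlam : Fin n → ℝ}
    (d1 d2 : SolData K N lam tlam) : ℝ :=
  ∫ x : ℝ, ‖d2.w0 x - d1.w0 x‖

/-- `w0 ∈ W^{1,1}(ℝ;ℝⁿ)` with (weak) derivative `g`. -/
def W11 {n : ℕ} (w0 g : ℝ → Fin n → ℝ) : Prop :=
  MeasureTheory.Integrable g ∧ ∀ x y : ℝ, w0 y - w0 x = ∫ t in x..y, g t

open scoped NNReal

theorem abs_intervalIntegral_le_integral_of_abs_le {f g : ℝ → ℝ} (hf : AEStronglyMeasurable f)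
    (hg : Integrable g) (hfg : ∀ x, |f x| ≤ g x) (a b : ℝ) :
    |∫ x in a..b, f x| ≤ ∫ x, g x := by
  have hg_nonneg : 0 ≤ᵐ[volume] g := ae_of_all _ fun x => (abs_nonneg _).trans (hfg x)
  calc |∫ x in a..b, f x| ≤ ∫ x in Set.uIoc a b, ‖f x‖ := by
        rw [← Real.norm_eq_abs]; exact intervalIntegral.norm_integral_le_integral_norm_uIoc
    _ ≤ ∫ x in Set.uIoc a b, g x :=
        setIntegral_mono_on (hg.mono' hf (ae_of_all _ hfg)).norm.integrableOn hg.integrableOn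
          measurableSet_uIoc fun x _ => hfg x
    _ ≤ ∫ x, g x := setIntegral_le_integral hg hg_nonneg

theorem mul_abs_sub_le_abs_intervalIntegral {f : ℝ → ℝ} {c : ℝ}
    (hf : ∀ a b, IntervalIntegrable f volume a b) (hc : ∀ x, c ≤ f x) (a b : ℝ) :
    c * |b - a| ≤ |∫ x in a..b, f x| := by
  have key : ∀ a b, a ≤ b → c * (b - a) ≤ ∫ x in a..b, f x := fun a b hab => by
    simpa [mul_comm] using intervalIntegral.integral_mono_on hab intervalIntegrable_const
      (hf a b) fun x _ => hc x
  rcases le_total a b with hab | hba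
  · rw [abs_of_nonneg (sub_nonneg.2 hab)]
    exact (key a b hab).trans (le_abs_self _)
  · rw [abs_sub_comm, abs_of_nonneg (sub_nonneg.2 hba), intervalIntegral.integral_symm, abs_neg]
    exact (key b a hba).trans (le_abs_self _)

namespace SolData

variable {n : ℕ} {K : Set (Fin n → ℝ)} {N : (Fin n → ℝ) → ℝ}
  {lam : Fin n → (Fin n → ℝ) → ℝ} {tlam : Fin n → ℝ}

theorem intervalIntegrable_comp_w0 (d : SolData K N lam tlam) (hK : IsCompact K)
    {f : (Fin n → ℝ) → ℝ} (hf : Continuous f) (a b : ℝ) :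
    IntervalIntegrable (fun ξ => f (d.w0 ξ)) volume a b := by
  obtain ⟨B, hB⟩ := hK.exists_bound_of_continuousOn hf.continuousOn
  rw [intervalIntegrable_iff]
  exact Measure.integrableOn_of_bounded (M := B) measure_Ioc_lt_top.ne
    (hf.measurable.comp d.meas).aestronglyMeasurable (ae_of_all _ fun ξ => hB _ (d.memK ξ))

theorem Z0_sub_Z0 (d : SolData K N lam tlam) (hK : IsCompact K) (hN : Continuous N) (a b : ℝ) :
    d.Z0 b - d.Z0 a = ∫ ξ in a..b, N (d.w0 ξ) := by
  rw [d.defZ0, d.defZ0, intervalIntegral.integral_interval_sub_left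
    (d.intervalIntegrable_comp_w0 hK hN 0 b) (d.intervalIntegrable_comp_w0 hK hN 0 a)]

theorem mul_abs_sub_le_abs_Z0_sub (d : SolData K N lam tlam) (hK : IsCompact K)
    (hN : Continuous N) {c : ℝ} (hc : ∀ w ∈ K, c ≤ N w) (a b : ℝ) :
    c * |b - a| ≤ |d.Z0 b - d.Z0 a| := by
  rw [d.Z0_sub_Z0 hK hN]
  exact mul_abs_sub_le_abs_intervalIntegral (d.intervalIntegrable_comp_w0 hK hN)
    (fun ξ => hc _ (d.memK ξ)) a b

theorem abs_Z0_sub_Z0_le (d1 d2 : SolData K N lam tlam) (hK : IsCompact K) (hN : Continuous N)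
    {L : ℝ≥0} (hL : LipschitzOnWith L N K) (x : ℝ) :
    |d2.Z0 x - d1.Z0 x| ≤ L * R0 d1 d2 := by
  have hsub : d2.Z0 x - d1.Z0 x = ∫ ξ in (0 : ℝ)..x, (N (d2.w0 ξ) - N (d1.w0 ξ)) := by
    rw [d2.defZ0, d1.defZ0, intervalIntegral.integral_sub
      (d2.intervalIntegrable_comp_w0 hK hN 0 x) (d1.intervalIntegrable_comp_w0 hK hN 0 x)]
  rw [hsub, R0, ← integral_const_mul]
  refine abs_intervalIntegral_le_integral_of_abs_le
    ((hN.measurable.comp d2.meas).sub (hN.measurable.comp d1.meas)).aestronglyMeasurable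
    ((d2.intgr.sub d1.intgr).norm.const_mul _) (fun ξ => ?_) 0 x
  have h := hL.dist_le_mul _ (d2.memK ξ) _ (d1.memK ξ)
  rwa [Real.dist_eq, dist_eq_norm] at h

theorem mul_abs_X0_sub_X0_le (d1 d2 : SolData K N lam tlam) (hK : IsCompact K)
    (hN : Continuous N) {c : ℝ} (hc : ∀ w ∈ K, c ≤ N w) {L : ℝ≥0} (hL : LipschitzOnWith L N K)
    (z : ℝ) :
    c * |d2.X0 z - d1.X0 z| ≤ L * R0 d1 d2 := by
  calc c * |d2.X0 z - d1.X0 z| ≤ |d1.Z0 (d2.X0 z) - d1.Z0 (d1.X0 z)| :=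
        d1.mul_abs_sub_le_abs_Z0_sub hK hN hc _ _
    _ = |d2.Z0 (d2.X0 z) - d1.Z0 (d2.X0 z)| := by rw [d1.invZ0X0, d2.invZ0X0, abs_sub_comm]
    _ ≤ L * R0 d1 d2 := abs_Z0_sub_Z0_le d1 d2 hK hN hL _

theorem mul_abs_X0_Z0_sub_le (d1 d2 : SolData K N lam tlam) (hK : IsCompact K)
    (hN : Continuous N) {c : ℝ} (hc : ∀ w ∈ K, c ≤ N w) {L : ℝ≥0} (hL : LipschitzOnWith L N K)
    (x : ℝ) :
    c * |d1.X0 (d2.Z0 x) - x| ≤ L * R0 d1 d2 := by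
  have h := d1.mul_abs_sub_le_abs_Z0_sub hK hN hc x (d1.X0 (d2.Z0 x))
  rw [d1.invZ0X0] at h
  exact h.trans (abs_Z0_sub_Z0_le d1 d2 hK hN hL x)

end SolData

theorem stmt_10
    (n : ℕ)
    (K : Set (Fin n → ℝ)) (hK : IsCompact K)
    (lam : Fin n → (Fin n → ℝ) → ℝ)
    (N : (Fin n → ℝ) → ℝ) (hN : ContDiff ℝ 1 N)
    (c C : ℝ) (hc : 0 < c)
    (hNbd : ∀ w ∈ convexHull ℝ K, c ≤ N w ∧ N w ≤ C)
    (tlam : Fin n → ℝ)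
    :
    ∃ C1 > (0:ℝ), ∀ d1 d2 : SolData K N lam tlam, ∀ x z : ℝ,
      |d2.Z0 x - d1.Z0 x| ≤ C1 * R0 d1 d2 ∧
      |d2.X0 z - d1.X0 z| ≤ C1 * R0 d1 d2 ∧
      |d1.X0 (d2.Z0 x) - x| ≤ C1 * R0 d1 d2 := by
  obtain ⟨L, hL⟩ := hN.locallyLipschitz.locallyLipschitzOn.exists_lipschitzOnWith_of_compact hK
  have hcK : ∀ w ∈ K, c ≤ N w := fun w hw => (hNbd w (subset_convexHull ℝ K hw)).1
  have hNc := hN.continuous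
  refine ⟨L / c + L + 1, by positivity, fun d1 d2 x z => ?_⟩
  have hR : 0 ≤ R0 d1 d2 := integral_nonneg fun _ => norm_nonneg _
  have hLc : 0 ≤ (L : ℝ) / c := by positivity
  have hLC : (L : ℝ) ≤ L / c + L + 1 := by linarith
  have hLcC : (L : ℝ) / c ≤ L / c + L + 1 := by linarith [L.coe_nonneg]
  have hdiv : ∀ A : ℝ, c * A ≤ L * R0 d1 d2 → A ≤ (L / c + L + 1) * R0 d1 d2 := fun A hA =>
    calc A ≤ L / c * R0 d1 d2 := by rw [div_mul_eq_mul_div, le_div_iff₀ hc]; linarith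
      _ ≤ _ := by gcongr
  exact ⟨(d1.abs_Z0_sub_Z0_le d2 hK hNc hL x).trans (by gcongr),
    hdiv _ (d1.mul_abs_X0_sub_X0_le d2 hK hNc hcK hL z),
    hdiv _ (d1.mul_abs_X0_Z0_sub_le d2 hK hNc hcK hL x)⟩
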